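/- arXiv:1907.05134 — 2 statements merged into one kernel-verified Lean document; each statement's English description precedes it below -/
import Mathlib

section
/- Let g be a symmetric positive definite 2×2 real matrix with entries g₁₁, g₁₂, g₂₂ and determinant D = g₁₁g₂₂ − g₁₂². Then the function f(θ) = √(g₁₁cos²θ + 2g₁₂cos θ sin θ + g₂₂sin²θ) satisfies the ODE (f'' + f)·P = f·sin θ + cos θ·f', where P(θ) = K₀cos³θ + K₁cos²θ sin θ + K₂cos θ sin²θ + K₃sin³θ with K₀ = g₁₂g₁₁/D, K₁ = 1 + 3g₁₂²/D, K₂ = 3g₂₂g₁₂/D, K₃ = g₂₂²/D. -/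
/-!
With `Q θ = g(u_θ, u_θ)` for `u_θ = (cos θ, sin θ)` and `f = √Q`, the function `Q` is a
trigonometric polynomial of degree two, so `Q'' = 2 tr g - 4 Q` and
`Q'² + (2Q - tr g)² = (g₁₁ - g₂₂)² + 4 g₁₂²`. These give `f'' + f = D / f³`. On the other hand
`D · P = Q · (g₁₂ cos θ + g₂₂ sin θ)` is an identity of cubic forms, and
`Q sin θ + cos θ · Q' / 2 = g₁₂ cos θ + g₂₂ sin θ`, i.e. `f sin θ + cos θ f' = (g₁₂ cos θ + g₂₂ sin θ) / f`.
Both sides of the equation are therefore `(g₁₂ cos θ + g₂₂ sin θ) / f`.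
-/

open Real

theorem hasDerivAt_deriv_sqrt {Q Q' : ℝ → ℝ} {Q'' x : ℝ} (hQ : ∀ t, HasDerivAt Q (Q' t) t)
    (hpos : ∀ t, 0 < Q t) (hQ' : HasDerivAt Q' Q'' x) :
    HasDerivAt (deriv fun t => √(Q t))
      ((2 * Q x * Q'' - Q' x ^ 2) / (4 * Q x * √(Q x))) x := by
  rw [show deriv (fun t => √(Q t)) = fun t => Q' t / (2 * √(Q t)) from
    funext fun t => ((hQ t).sqrt (hpos t).ne').deriv]
  have hx := hpos x
  have hr : 0 < √(Q x) := sqrt_pos.2 hx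
  refine (hQ'.fun_div (((hQ x).sqrt hx.ne').const_mul 2) (by positivity)).congr_deriv ?_
  have hQr : Q x = √(Q x) ^ 2 := (sq_sqrt hx.le).symm
  set r := √(Q x)
  rw [hQr]
  field_simp
  ring

noncomputable def trigQuadForm (g11 g12 g22 θ : ℝ) : ℝ :=
  g11 * cos θ ^ 2 + 2 * g12 * cos θ * sin θ + g22 * sin θ ^ 2

noncomputable def trigQuadFormDeriv (g11 g12 g22 θ : ℝ) : ℝ :=
  2 * ((g22 - g11) * sin θ * cos θ + g12 * (cos θ ^ 2 - sin θ ^ 2))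

section

variable {g11 g12 g22 : ℝ}

theorem trigQuadForm_pos (h11 : 0 < g11) (hD : 0 < g11 * g22 - g12 ^ 2) (θ : ℝ) :
    0 < trigQuadForm g11 g12 g22 θ := by
  have hθ := sin_sq_add_cos_sq θ
  unfold trigQuadForm
  by_cases hs : sin θ = 0
  · have hc : cos θ ^ 2 = 1 := by rw [hs] at hθ; linarith
    rw [hs, hc]
    linarith
  · have hs2 : 0 < sin θ ^ 2 := by positivity
    refine pos_of_mul_pos_right (a := g11) ?_ h11.le
    -- `g₁₁ Q = (g₁₁ cos θ + g₁₂ sin θ)² + D sin² θ`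
    nlinarith [sq_nonneg (g11 * cos θ + g12 * sin θ), mul_pos hD hs2]

theorem hasDerivAt_trigQuadForm (θ : ℝ) :
    HasDerivAt (trigQuadForm g11 g12 g22) (trigQuadFormDeriv g11 g12 g22 θ) θ := by
  have hc := hasDerivAt_cos θ
  have hs := hasDerivAt_sin θ
  refine ((((hc.pow 2).const_mul g11).add ((hc.const_mul (2 * g12)).mul hs)).add
    ((hs.pow 2).const_mul g22)).congr_deriv ?_
  simp only [trigQuadFormDeriv]
  norm_num
  ring

theorem hasDerivAt_trigQuadFormDeriv (θ : ℝ) :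
    HasDerivAt (trigQuadFormDeriv g11 g12 g22)
      (2 * (g11 + g22) - 4 * trigQuadForm g11 g12 g22 θ) θ := by
  have hc := hasDerivAt_cos θ
  have hs := hasDerivAt_sin θ
  refine ((((hs.const_mul (g22 - g11)).mul hc).add
    (((hc.pow 2).sub (hs.pow 2)).const_mul g12)).const_mul 2).congr_deriv ?_
  simp only [trigQuadForm]
  norm_num
  linear_combination (2 * (g11 + g22)) * sin_sq_add_cos_sq θ

theorem trigQuadFormDeriv_sq_add (θ : ℝ) :
    trigQuadFormDeriv g11 g12 g22 θ ^ 2 + (2 * trigQuadForm g11 g12 g22 θ - (g11 + g22)) ^ 2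
      = (g11 - g22) ^ 2 + 4 * g12 ^ 2 := by
  simp only [trigQuadFormDeriv]
  -- with `u = cos² θ + sin² θ`, the homogeneous identity
  -- `Q'² + (2Q - (g₁₁ + g₂₂) u)² = ((g₁₁ - g₂₂)² + 4 g₁₂²) u²` holds in `ℝ[cos θ, sin θ]`
  linear_combination (norm := (unfold trigQuadForm; ring))
    ((g11 + g22) * (4 * trigQuadForm g11 g12 g22 θ - (g11 + g22) * (1 + sin θ ^ 2 + cos θ ^ 2))
      + ((g11 - g22) ^ 2 + 4 * g12 ^ 2) * (sin θ ^ 2 + cos θ ^ 2 + 1)) * sin_sq_add_cos_sq θ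

theorem trigQuadForm_mul_sin_add_cos_mul_deriv (θ : ℝ) :
    trigQuadForm g11 g12 g22 θ * sin θ + cos θ * trigQuadFormDeriv g11 g12 g22 θ / 2
      = g12 * cos θ + g22 * sin θ := by
  simp only [trigQuadForm, trigQuadFormDeriv]
  linear_combination (g12 * cos θ + g22 * sin θ) * sin_sq_add_cos_sq θ

theorem deriv_deriv_sqrt_trigQuadForm_add (h11 : 0 < g11) (hD : 0 < g11 * g22 - g12 ^ 2)
    (θ : ℝ) :
    deriv (deriv fun t => √(trigQuadForm g11 g12 g22 t)) θ + √(trigQuadForm g11 g12 g22 θ)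
      = (g11 * g22 - g12 ^ 2) / (trigQuadForm g11 g12 g22 θ * √(trigQuadForm g11 g12 g22 θ)) := by
  rw [(hasDerivAt_deriv_sqrt hasDerivAt_trigQuadForm (trigQuadForm_pos h11 hD)
    (hasDerivAt_trigQuadFormDeriv θ)).deriv]
  have hQ := trigQuadForm_pos h11 hD θ
  have hQr : trigQuadForm g11 g12 g22 θ = √(trigQuadForm g11 g12 g22 θ) ^ 2 :=
    (sq_sqrt hQ.le).symm
  have hr : 0 < √(trigQuadForm g11 g12 g22 θ) := sqrt_pos.2 hQ
  have hsq := trigQuadFormDeriv_sq_add (g11 := g11) (g12 := g12) (g22 := g22) θ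
  set r := √(trigQuadForm g11 g12 g22 θ)
  set Q := trigQuadForm g11 g12 g22 θ
  field_simp
  linear_combination (-4 * Q) * hQr - hsq

end

theorem stmt_3_general (g11 g12 g22 : ℝ) (h11 : 0 < g11)
    (hD : 0 < g11 * g22 - g12 ^ 2)
    (f P : ℝ → ℝ)
    (hf : ∀ θ : ℝ, f θ = Real.sqrt (g11 * Real.cos θ ^ 2
      + 2 * g12 * Real.cos θ * Real.sin θ + g22 * Real.sin θ ^ 2))
    (K0 K1 K2 K3 : ℝ)
    (hK0 : K0 = g12 * g11 / (g11 * g22 - g12 ^ 2))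
    (hK1 : K1 = 1 + 3 * g12 ^ 2 / (g11 * g22 - g12 ^ 2))
    (hK2 : K2 = 3 * g22 * g12 / (g11 * g22 - g12 ^ 2))
    (hK3 : K3 = g22 ^ 2 / (g11 * g22 - g12 ^ 2))
    (hP : ∀ θ : ℝ, P θ = K0 * Real.cos θ ^ 3 + K1 * Real.cos θ ^ 2 * Real.sin θ
      + K2 * Real.cos θ * Real.sin θ ^ 2 + K3 * Real.sin θ ^ 3) :
    ∀ θ : ℝ, (deriv (deriv f) θ + f θ) * P θ
      = f θ * Real.sin θ + Real.cos θ * deriv f θ := by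
  intro θ
  have hfQ : f = fun t => √(trigQuadForm g11 g12 g22 t) := funext hf
  have hQ := trigQuadForm_pos h11 hD θ
  have hPθ : P θ = trigQuadForm g11 g12 g22 θ * (g12 * cos θ + g22 * sin θ)
      / (g11 * g22 - g12 ^ 2) := by
    rw [hP, hK0, hK1, hK2, hK3]
    unfold trigQuadForm
    field_simp
    ring
  rw [hPθ, hfQ, deriv_deriv_sqrt_trigQuadForm_add h11 hD,
    ((hasDerivAt_trigQuadForm θ).sqrt hQ.ne').deriv,
    ← trigQuadForm_mul_sin_add_cos_mul_deriv]
  have hQr : trigQuadForm g11 g12 g22 θ = √(trigQuadForm g11 g12 g22 θ) ^ 2 :=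
    (sq_sqrt hQ.le).symm
  have hr : 0 < √(trigQuadForm g11 g12 g22 θ) := sqrt_pos.2 hQ
  set r := √(trigQuadForm g11 g12 g22 θ)
  rw [hQr]
  field_simp
  ring

/-- The Riemannian norm `f(θ) = √(g₁₁cos²θ + 2g₁₂cosθ sinθ + g₂₂sin²θ)` of a
positive definite symmetric matrix `g` solves the ODE
`(f'' + f)·P = f·sin θ + cos θ·f'` with the stated coefficients. -/
theorem stmt_3 (g11 g12 g22 : ℝ) (h11 : 0 < g11) (h22 : 0 < g22)
    (hD : 0 < g11 * g22 - g12 ^ 2)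
    (f P : ℝ → ℝ)
    (hf : ∀ θ : ℝ, f θ = Real.sqrt (g11 * Real.cos θ ^ 2
      + 2 * g12 * Real.cos θ * Real.sin θ + g22 * Real.sin θ ^ 2))
    (K0 K1 K2 K3 : ℝ)
    (hK0 : K0 = g12 * g11 / (g11 * g22 - g12 ^ 2))
    (hK1 : K1 = 1 + 3 * g12 ^ 2 / (g11 * g22 - g12 ^ 2))
    (hK2 : K2 = 3 * g22 * g12 / (g11 * g22 - g12 ^ 2))
    (hK3 : K3 = g22 ^ 2 / (g11 * g22 - g12 ^ 2))
    (hP : ∀ θ : ℝ, P θ = K0 * Real.cos θ ^ 3 + K1 * Real.cos θ ^ 2 * Real.sin θ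
      + K2 * Real.cos θ * Real.sin θ ^ 2 + K3 * Real.sin θ ^ 3) :
    ∀ θ : ℝ, (deriv (deriv f) θ + f θ) * P θ
      = f θ * Real.sin θ + Real.cos θ * deriv f θ :=
  stmt_3_general g11 g12 g22 h11 hD f P hf K0 K1 K2 K3 hK0 hK1 hK2 hK3 hP
end

section
/- Let n ≥ 2, let T^i_{jk} be a constant real tensor on ℝⁿ symmetric in the lower indices j,k, let σ be a nonzero constant covector, and let F : ℝⁿ \ {0} → ℝ be C³ and positively 1-homogeneous. If F satisfies T^i_{jk} F_{y^i y^s} y^k y^j = F·σ_s − σ₀·F_{y^s} for all s (where σ₀ = σ_i y^i), then F satisfies T^i_{jk} F_{y^i y^s} y^k − T^i_{sk} F_{y^i y^j} y^k = F_{y^j}·σ_s − σ_j·F_{y^s} for all j, s. Conversely, contracting the latter system with y^j recovers the former. -/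
/-!
Differentiating the first system in `y^ℓ` gives
`2 T^i_{ℓk} y^k F_{is} + T^i_{jk} y^j y^k F_{isℓ} = F_ℓ σ_s − σ_ℓ F_s − σ₀ F_{sℓ}`
(the symmetry of `T` merges the two terms coming from `y^k y^j`). Antisymmetrizing in `(s, ℓ)`
kills the terms with `F_{isℓ}` and `F_{sℓ}` by the symmetry of higher derivatives, leaving twice
the second system. Conversely, contracting the second system with `y^j`, Euler's identities
`y^j F_{ij} = 0` and `y^j F_j = F` turn it into the first.
-/

open Real

/-- First partial derivative of `F` in the direction `y^i`. -/
noncomputable def pd {n : ℕ} (F : (Fin n → ℝ) → ℝ) (i : Fin n)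
    (y : Fin n → ℝ) : ℝ :=
  fderiv ℝ F y (Pi.single i 1)

/-- Second partial derivative `F_{y^i y^s}`. -/
noncomputable def pd2 {n : ℕ} (F : (Fin n → ℝ) → ℝ) (i s : Fin n)
    (y : Fin n → ℝ) : ℝ :=
  fderiv ℝ (fun z => pd F i z) y (Pi.single s 1)

open Finset Filter Topology

section Homogeneous

variable {E : Type*} [NormedAddCommGroup E] [NormedSpace ℝ E] {g : E → ℝ} {y : E}

theorem fderiv_apply_self_of_homogeneous {d : ℝ}
    (hg : ∀ c : ℝ, 0 < c → g (c • y) = c ^ d * g y) (hd : DifferentiableAt ℝ g y) :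
    fderiv ℝ g y y = d * g y := by
  have hline : HasDerivAt (fun c : ℝ => g (c • y)) (fderiv ℝ g y y) 1 := by
    have hd' : HasFDerivAt g (fderiv ℝ g y) ((1 : ℝ) • y) := by
      rw [one_smul]; exact hd.hasFDerivAt
    exact hd'.comp_hasDerivAt (1 : ℝ) (by simpa using (hasDerivAt_id (1 : ℝ)).smul_const y)
  have hpow : HasDerivAt (fun c : ℝ => c ^ d * g y) (d * g y) 1 := by
    simpa using (hasDerivAt_rpow_const (p := d) (Or.inl one_ne_zero)).mul_const (g y)
  have heq : (fun c : ℝ => g (c • y)) =ᶠ[𝓝 1] fun c => c ^ d * g y := by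
    filter_upwards [lt_mem_nhds one_pos] with c hc using hg c hc
  exact hline.unique (hpow.congr_of_eventuallyEq heq)

theorem fderiv_smul_of_homogeneous {c : ℝ} (hc : c ≠ 0) (hg : ∀ z, g (c • z) = c * g z) :
    fderiv ℝ g (c • y) = fderiv ℝ g y := by
  have h := fderiv_comp_smul (f := g) (x := y) c
  rw [show (fun z => g (c • z)) = c • g from funext hg, fderiv_const_smul_field] at h
  exact smul_right_injective _ hc h.symm

end Homogeneous

section Coordinates

variable {n : ℕ} {f g F : (Fin n → ℝ) → ℝ} {y : Fin n → ℝ}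

theorem fderiv_apply_eq_sum_mul_pd (g : (Fin n → ℝ) → ℝ) (y v : Fin n → ℝ) :
    fderiv ℝ g y v = ∑ i, v i * pd g i y := by
  conv_lhs => rw [← (Pi.basisFun ℝ (Fin n)).sum_repr v]
  simp [pd]

theorem pd2_eq_pd_pd (F : (Fin n → ℝ) → ℝ) (i s : Fin n) (y : Fin n → ℝ) :
    pd2 F i s y = pd (pd F i) s y := rfl

theorem sum_mul_pd_of_homogeneous (hhom : ∀ c : ℝ, 0 < c → ∀ y, F (c • y) = c * F y)
    (hd : DifferentiableAt ℝ F y) : ∑ i, y i * pd F i y = F y := by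
  rw [← fderiv_apply_eq_sum_mul_pd, fderiv_apply_self_of_homogeneous (d := 1) _ hd, one_mul]
  simpa using fun c hc => hhom c hc y

theorem pd_smul_of_homogeneous (hhom : ∀ c : ℝ, 0 < c → ∀ y, F (c • y) = c * F y)
    (i : Fin n) {c : ℝ} (hc : 0 < c) : pd F i (c • y) = pd F i y := by
  simp only [pd, fderiv_smul_of_homogeneous hc.ne' (hhom c hc)]

theorem sum_mul_pd2_of_homogeneous (hhom : ∀ c : ℝ, 0 < c → ∀ y, F (c • y) = c * F y)
    (i : Fin n) (hd : DifferentiableAt ℝ (pd F i) y) : ∑ k, y k * pd2 F i k y = 0 := by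
  simp only [pd2_eq_pd_pd]
  rw [← fderiv_apply_eq_sum_mul_pd, fderiv_apply_self_of_homogeneous (d := 0) _ hd,
    zero_mul]
  simpa using fun c hc => pd_smul_of_homogeneous hhom i hc

theorem ContDiffAt.pd {m : ℕ} (hf : ContDiffAt ℝ (m + 1) f y) (i : Fin n) :
    ContDiffAt ℝ m (pd f i) y :=
  (hf.fderiv_right le_rfl).clm_apply contDiffAt_const

theorem pd2_comm (hg : ContDiffAt ℝ 2 g y) (i s : Fin n) : pd2 g i s y = pd2 g s i y := by
  have hdiff : DifferentiableAt ℝ (fderiv ℝ g) y :=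
    (hg.fderiv_right (m := 1) le_rfl).differentiableAt one_ne_zero
  have key : ∀ a b : Fin n, pd2 g a b y =
      fderiv ℝ (fderiv ℝ g) y (Pi.single b 1) (Pi.single a 1) := fun a b => by
    simp [pd2, pd, fderiv_clm_apply hdiff (differentiableAt_const _)]
  rw [key, key, hg.isSymmSndFDerivAt (by simp)]

theorem pd_eq_of_eventuallyEq (h : f =ᶠ[𝓝 y] g) (i : Fin n) : pd f i y = pd g i y := by
  rw [pd, pd, h.fderiv_eq]

theorem pd_coord (k i : Fin n) : pd (fun z => z k) i y = (Pi.single i 1 : Fin n → ℝ) k := by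
  rw [pd, (hasFDerivAt_apply k y).fderiv]
  rfl

theorem pd_mul (hf : DifferentiableAt ℝ f y) (hg : DifferentiableAt ℝ g y) (i : Fin n) :
    pd (fun z => f z * g z) i y = pd f i y * g y + f y * pd g i y := by
  simp [pd, fderiv_fun_mul hf hg]; ring

theorem pd_sum {ι : Type*} (s : Finset ι) {f : ι → (Fin n → ℝ) → ℝ}
    (hf : ∀ j ∈ s, DifferentiableAt ℝ (f j) y) (i : Fin n) :
    pd (fun z => ∑ j ∈ s, f j z) i y = ∑ j ∈ s, pd (f j) i y := by
  simp [pd, fderiv_fun_sum hf]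

theorem pd_const (c : ℝ) (i : Fin n) : pd (fun _ => c) i y = 0 := by
  simp [pd]

theorem pd_sub (hf : DifferentiableAt ℝ f y) (hg : DifferentiableAt ℝ g y) (i : Fin n) :
    pd (fun z => f z - g z) i y = pd f i y - pd g i y := by
  simp [pd, fderiv_fun_sub hf hg]

theorem pd_linear (a : Fin n → ℝ) (i : Fin n) : pd (fun z => ∑ j, a j * z j) i y = a i := by
  simp (disch := fun_prop) only [pd_sum, pd_mul, pd_const, pd_coord]
  simp [Pi.single_apply]

theorem pd_quadratic (A : Fin n → Fin n → ℝ) (i : Fin n) :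
    pd (fun z => ∑ j, ∑ k, A j k * z k * z j) i y = ∑ j, A j i * y j + ∑ k, A i k * y k := by
  simp (disch := fun_prop) only [pd_sum, pd_mul, pd_const, pd_coord]
  simp [Pi.single_apply, Finset.sum_add_distrib]

theorem pd_sum_mul_pd2 (T : Fin n → Fin n → Fin n → ℝ) (s ℓ : Fin n)
    (hd : ∀ i, DifferentiableAt ℝ (pd2 F i s) y) :
    pd (fun z => ∑ i, ∑ j, ∑ k, T i j k * pd2 F i s z * z k * z j) ℓ y
      = ∑ i, ((∑ j, T i j ℓ * y j + ∑ k, T i ℓ k * y k) * pd2 F i s y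
          + (∑ j, ∑ k, T i j k * y k * y j) * pd2 (pd F i) s ℓ y) := by
  have hfun : (fun z => ∑ i, ∑ j, ∑ k, T i j k * pd2 F i s z * z k * z j)
      = fun z => ∑ i, (∑ j, ∑ k, T i j k * z k * z j) * pd2 F i s z := by
    funext z
    simp only [Finset.sum_mul]
    exact Fintype.sum_congr _ _ fun i => Fintype.sum_congr _ _ fun j =>
      Fintype.sum_congr _ _ fun k => by ring
  rw [hfun, pd_sum (f := fun i z => (∑ j, ∑ k, T i j k * z k * z j) * pd2 F i s z) _
    fun i _ => DifferentiableAt.mul (by fun_prop) (hd i)]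
  refine Fintype.sum_congr _ _ fun i => ?_
  rw [pd_mul (by fun_prop) (hd i), pd_quadratic]
  rfl

theorem pd_sub_mul_pd (σ : Fin n → ℝ) (s ℓ : Fin n) (hF : DifferentiableAt ℝ F y)
    (hd : DifferentiableAt ℝ (pd F s) y) :
    pd (fun z => F z * σ s - (∑ i, σ i * z i) * pd F s z) ℓ y
      = pd F ℓ y * σ s - σ ℓ * pd F s y - (∑ i, σ i * y i) * pd2 F s ℓ y := by
  simp (disch := fun_prop) only [pd_sub, pd_mul, pd_const, pd_linear, pd2_eq_pd_pd]
  ring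

theorem prolonged_system_of_system {T : Fin n → Fin n → Fin n → ℝ} (hT : ∀ i j k, T i j k = T i k j)
    {σ : Fin n → ℝ} (hF : ContDiffAt ℝ 3 F y)
    (H : ∀ᶠ z in 𝓝 y, ∀ s, ∑ i, ∑ j, ∑ k, T i j k * pd2 F i s z * z k * z j
      = F z * σ s - (∑ i, σ i * z i) * pd F s z) (j s : Fin n) :
    (∑ i, ∑ k, T i j k * pd2 F i s y * y k) - (∑ i, ∑ k, T i s k * pd2 F i j y * y k)
      = pd F j y * σ s - σ j * pd F s y := by
  have hpd : ∀ i, ContDiffAt ℝ 2 (pd F i) y := hF.pd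
  have hpd2 : ∀ i s, DifferentiableAt ℝ (pd2 F i s) y := fun i s =>
    ((hpd i).pd s).differentiableAt one_ne_zero
  have key : ∀ ℓ s, 2 * ∑ i, ∑ k, T i ℓ k * pd2 F i s y * y k
      + ∑ i, (∑ j, ∑ k, T i j k * y k * y j) * pd2 (pd F i) s ℓ y
      = pd F ℓ y * σ s - σ ℓ * pd F s y - (∑ i, σ i * y i) * pd2 F s ℓ y := by
    intro ℓ s
    have h := pd_eq_of_eventuallyEq (H.mono fun z hz => hz s) ℓ
    rw [pd_sum_mul_pd2 T s ℓ (hpd2 · s),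
      pd_sub_mul_pd σ s ℓ (hF.differentiableAt (by norm_num))
        ((hpd s).differentiableAt (by norm_num))] at h
    rw [← h, Finset.mul_sum, ← Finset.sum_add_distrib]
    refine Fintype.sum_congr _ _ fun i => ?_
    have hsym : ∑ j, T i j ℓ * y j = ∑ k, T i ℓ k * y k :=
      Fintype.sum_congr _ _ fun j => by rw [hT]
    have hfactor : ∑ k, T i ℓ k * pd2 F i s y * y k = (∑ k, T i ℓ k * y k) * pd2 F i s y := by
      rw [Finset.sum_mul]
      exact Fintype.sum_congr _ _ fun k => by ring
    rw [hsym, hfactor]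
    ring
  have hF2 : pd2 F s j y = pd2 F j s y := pd2_comm (hF.of_le (by norm_num)) s j
  have hF3 : ∑ i, (∑ j, ∑ k, T i j k * y k * y j) * pd2 (pd F i) s j y
      = ∑ i, (∑ j, ∑ k, T i j k * y k * y j) * pd2 (pd F i) j s y :=
    Fintype.sum_congr _ _ fun i => by rw [pd2_comm (hpd i) s j]
  have hjs := key j s
  rw [hF2, hF3] at hjs
  linarith [key s j]

theorem system_of_prolonged_system (hhom : ∀ c : ℝ, 0 < c → ∀ y, F (c • y) = c * F y)
    (hF : DifferentiableAt ℝ F y) (hpd : ∀ i, DifferentiableAt ℝ (pd F i) y)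
    {T : Fin n → Fin n → Fin n → ℝ} {σ : Fin n → ℝ} {s : Fin n}
    (H : ∀ j, (∑ i, ∑ k, T i j k * pd2 F i s y * y k) - (∑ i, ∑ k, T i s k * pd2 F i j y * y k)
      = pd F j y * σ s - σ j * pd F s y) :
    ∑ i, ∑ j, ∑ k, T i j k * pd2 F i s y * y k * y j
      = F y * σ s - (∑ i, σ i * y i) * pd F s y := by
  have hA : ∑ j, y j * ∑ i, ∑ k, T i j k * pd2 F i s y * y k
      = ∑ i, ∑ j, ∑ k, T i j k * pd2 F i s y * y k * y j := by
    simp only [Finset.mul_sum]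
    rw [Finset.sum_comm]
    exact Fintype.sum_congr _ _ fun i => Fintype.sum_congr _ _ fun j =>
      Fintype.sum_congr _ _ fun k => by ring
  have hB : ∑ j, y j * ∑ i, ∑ k, T i s k * pd2 F i j y * y k = 0 := by
    have hB' : ∑ j, y j * ∑ i, ∑ k, T i s k * pd2 F i j y * y k
        = ∑ i, ∑ k, T i s k * y k * ∑ j, y j * pd2 F i j y := by
      simp only [Finset.mul_sum]
      rw [Finset.sum_comm]
      refine Fintype.sum_congr _ _ fun i => ?_
      rw [Finset.sum_comm]
      exact Fintype.sum_congr _ _ fun k => Fintype.sum_congr _ _ fun j => by ring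
    simp [hB', sum_mul_pd2_of_homogeneous hhom _ (hpd _)]
  calc ∑ i, ∑ j, ∑ k, T i j k * pd2 F i s y * y k * y j
      = ∑ j, y j * ((∑ i, ∑ k, T i j k * pd2 F i s y * y k)
          - (∑ i, ∑ k, T i s k * pd2 F i j y * y k)) := by
        simp only [mul_sub, Finset.sum_sub_distrib, hA, hB, sub_zero]
    _ = ∑ j, y j * (pd F j y * σ s - σ j * pd F s y) := by simp only [H]
    _ = F y * σ s - (∑ i, σ i * y i) * pd F s y := by
        rw [← sum_mul_pd_of_homogeneous hhom hF, Finset.sum_mul, Finset.sum_mul,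
          ← Finset.sum_sub_distrib]
        exact Fintype.sum_congr _ _ fun j => by ring

end Coordinates

theorem stmt_12_general (n : ℕ)
    (T : Fin n → Fin n → Fin n → ℝ)
    (hTsym : ∀ i j k, T i j k = T i k j)
    (σ : Fin n → ℝ)
    (F : (Fin n → ℝ) → ℝ)
    (hhom : ∀ c : ℝ, 0 < c → ∀ y : Fin n → ℝ, F (c • y) = c * F y)
    (hC3 : ContDiffOn ℝ 3 F {y : Fin n → ℝ | y ≠ 0}) :
    (∀ y : Fin n → ℝ, y ≠ 0 → ∀ s : Fin n,
        ∑ i, ∑ j, ∑ k, T i j k * pd2 F i s y * y k * y j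
          = F y * σ s - (∑ i, σ i * y i) * pd F s y)
    ↔ (∀ y : Fin n → ℝ, y ≠ 0 → ∀ j s : Fin n,
        (∑ i, ∑ k, T i j k * pd2 F i s y * y k)
          - (∑ i, ∑ k, T i s k * pd2 F i j y * y k)
          = pd F j y * σ s - σ j * pd F s y) := by
  have hU : ∀ {y : Fin n → ℝ}, y ≠ 0 → {y : Fin n → ℝ | y ≠ 0} ∈ 𝓝 y := fun hy =>
    isOpen_compl_singleton.mem_nhds hy
  have hF : ∀ {y : Fin n → ℝ}, y ≠ 0 → ContDiffAt ℝ 3 F y := fun hy => hC3.contDiffAt (hU hy)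
  constructor
  · intro H y hy
    exact prolonged_system_of_system hTsym (hF hy) (eventually_of_mem (hU hy) H)
  · intro H y hy s
    have hpd (i : Fin n) : ContDiffAt ℝ 2 (pd F i) y := (hF hy).pd i
    exact system_of_prolonged_system hhom ((hF hy).differentiableAt (by norm_num))
      (fun i => (hpd i).differentiableAt (by norm_num)) (H y hy · s)

/-- The system `T^i_{jk} F_{y^i y^s} y^k y^j = F σ_s − σ₀ F_{y^s}` is
equivalent to its prolongation
`T^i_{jk} F_{y^i y^s} y^k − T^i_{sk} F_{y^i y^j} y^k = F_{y^j} σ_s − σ_j F_{y^s}`. -/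
theorem stmt_12 (n : ℕ) (hn : 2 ≤ n)
    (T : Fin n → Fin n → Fin n → ℝ)
    (hTsym : ∀ i j k, T i j k = T i k j)
    (σ : Fin n → ℝ) (hσ : σ ≠ 0)
    (F : (Fin n → ℝ) → ℝ)
    (hhom : ∀ c : ℝ, 0 < c → ∀ y : Fin n → ℝ, F (c • y) = c * F y)
    (hC3 : ContDiffOn ℝ 3 F {y : Fin n → ℝ | y ≠ 0}) :
    (∀ y : Fin n → ℝ, y ≠ 0 → ∀ s : Fin n,
        ∑ i, ∑ j, ∑ k, T i j k * pd2 F i s y * y k * y j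
          = F y * σ s - (∑ i, σ i * y i) * pd F s y)
    ↔ (∀ y : Fin n → ℝ, y ≠ 0 → ∀ j s : Fin n,
        (∑ i, ∑ k, T i j k * pd2 F i s y * y k)
          - (∑ i, ∑ k, T i s k * pd2 F i j y * y k)
          = pd F j y * σ s - σ j * pd F s y) :=
  stmt_12_general n T hTsym σ F hhom hC3
end
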